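/- Let X₁,…,X_{k-1}, Z be i.i.d. uniform on [-1,1] and s ∈ (0,1]. Then P(|min(X₁,…,X_{k-1},s)| < |Z|) = (2^k − 2 + (1−s)^k)/(k·2^{k-1}). -/

import Mathlib

/-!
Condition on `Z = z` and put `t = |z|`, which is a.s. in `(0, 1]`. Since `s > 0`, the event
`|min(X₁, …, Xₙ, s)| < t` is `{∀ i, Xᵢ > -t}` when `s < t`, and
`{∀ i, Xᵢ > -t} \ {∀ i, Xᵢ ≥ t}` when `t ≤ s`; so its conditional probability is
`((1 + t)/2)ⁿ - [t ≤ s] ((1 - t)/2)ⁿ`. As `|Z|` is uniform on `[0, 1]`, integrating this over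
`t ∈ [0, 1]` gives the formula.
-/

open MeasureTheory

noncomputable def unif : Measure ℝ :=
  (2 : ENNReal)⁻¹ • (volume.restrict (Set.Icc (-1 : ℝ) 1))

open Set

lemma unif_apply {S : Set ℝ} (hS : MeasurableSet S) :
    unif S = 2⁻¹ * volume (S ∩ Icc (-1) 1) := by
  rw [unif, Measure.smul_apply, Measure.restrict_apply hS, smul_eq_mul]

instance : IsProbabilityMeasure unif :=
  ⟨by
    rw [unif_apply .univ, univ_inter, Real.volume_Icc]
    norm_num [ENNReal.inv_mul_cancel]⟩

instance : NullSingletonClass unif :=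
  ⟨fun x => by
    rw [unif_apply (measurableSet_singleton x),
      measure_mono_null inter_subset_left (measure_singleton x), mul_zero]⟩

lemma unif_Ioi {t : ℝ} (ht : -1 ≤ t) :
    unif (Ioi t) = ENNReal.ofReal ((1 - t) / 2) := by
  have hIoc : Ioi t ∩ Icc (-1) 1 = Ioc t 1 := by
    ext x
    simp only [mem_inter_iff, mem_Ioi, mem_Icc, mem_Ioc]
    grind
  rw [unif_apply measurableSet_Ioi, hIoc, Real.volume_Ioc, ← ENNReal.ofReal_ofNat 2,
    ← ENNReal.ofReal_inv_of_pos two_pos, ← ENNReal.ofReal_mul (by norm_num)]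
  ring_nf

lemma unif_Ici {t : ℝ} (ht : -1 ≤ t) :
    unif (Ici t) = ENNReal.ofReal ((1 - t) / 2) := by
  rw [← measure_congr Ioi_ae_eq_Ici, unif_Ioi ht]

lemma integral_unif_comp_abs (g : ℝ → ℝ) : ∫ z, g |z| ∂unif = ∫ t in (0)..1, g t := by
  have hind : (Icc (-1) 1).indicator (fun z => g |z|) = fun z => (Iic 1).indicator g |z| := by
    ext z
    simp only [indicator_apply, mem_Icc, mem_Iic, abs_le]
  rw [unif, integral_smul_measure, ← integral_indicator measurableSet_Icc, hind,
    integral_comp_abs, integral_indicator measurableSet_Iic,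
    Measure.restrict_restrict measurableSet_Iic, Iic_inter_Ioi,
    intervalIntegral.integral_of_le zero_le_one]
  norm_num
  ring

lemma integral_one_add_div_two_pow (n : ℕ) (a b : ℝ) :
    ∫ t in a..b, ((1 + t) / 2) ^ n
      = 2 / (n + 1) * (((1 + b) / 2) ^ (n + 1) - ((1 + a) / 2) ^ (n + 1)) := by
  simp only [div_pow, intervalIntegral.integral_div,
    intervalIntegral.integral_comp_add_left (· ^ n), integral_pow]
  field_simp
  ring

lemma integral_one_sub_div_two_pow (n : ℕ) (a b : ℝ) :
    ∫ t in a..b, ((1 - t) / 2) ^ n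
      = 2 / (n + 1) * (((1 - a) / 2) ^ (n + 1) - ((1 - b) / 2) ^ (n + 1)) := by
  simp only [div_pow, intervalIntegral.integral_div,
    intervalIntegral.integral_comp_sub_left (· ^ n), integral_pow]
  field_simp
  ring

theorem MeasureTheory.Measure.pi_univ_pi_const {ι α : Type*} [Fintype ι] [MeasurableSpace α]
    (μ : Measure α) [SigmaFinite μ] (S : Set α) :
    Measure.pi (fun _ : ι => μ) (univ.pi fun _ => S) = μ S ^ Fintype.card ι := by
  simp [Measure.pi_pi]

noncomputable def probAbsMinLt (n : ℕ) (s t : ℝ) : ℝ :=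
  ((1 + t) / 2) ^ n - if t ≤ s then ((1 - t) / 2) ^ n else 0

lemma pi_unif_real_abs_min_inf'_lt {ι : Type*} [Fintype ι]
    (hne : (Finset.univ : Finset ι).Nonempty)
    {s t : ℝ} (hs : 0 < s) (ht0 : 0 < t) (ht1 : t ≤ 1) :
    (Measure.pi fun _ : ι => unif).real {x | |min (Finset.univ.inf' hne x) s| < t}
      = probAbsMinLt (Fintype.card ι) s t := by
  have hA : (Measure.pi fun _ : ι => unif).real (univ.pi fun _ => Ioi (-t))
      = ((1 + t) / 2) ^ Fintype.card ι := by
    rw [measureReal_def, Measure.pi_univ_pi_const, unif_Ioi (by linarith), ENNReal.toReal_pow,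
      ENNReal.toReal_ofReal (by linarith), sub_neg_eq_add]
  have hlower : ∀ x : ι → ℝ,
      -t < min (Finset.univ.inf' hne x) s ↔ x ∈ univ.pi fun _ => Ioi (-t) := by
    intro x
    simp only [lt_min_iff, Finset.lt_inf'_iff, Finset.mem_univ, forall_const, mem_univ_pi, mem_Ioi]
    grind
  rw [probAbsMinLt]
  split_ifs with hts
  · have hB : (Measure.pi fun _ : ι => unif).real (univ.pi fun _ => Ici t)
        = ((1 - t) / 2) ^ Fintype.card ι := by
      rw [measureReal_def, Measure.pi_univ_pi_const, unif_Ici (by linarith), ENNReal.toReal_pow,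
        ENNReal.toReal_ofReal (by linarith)]
    have hupper : ∀ x : ι → ℝ,
        min (Finset.univ.inf' hne x) s < t ↔ x ∉ univ.pi fun _ => Ici t := by
      intro x
      simp only [min_lt_iff, Finset.inf'_lt_iff, Finset.mem_univ, true_and, mem_univ_pi, mem_Ici]
      grind
    have hset : {x | |min (Finset.univ.inf' hne x) s| < t}
        = (univ.pi fun _ => Ioi (-t)) \ univ.pi fun _ => Ici t := by
      ext x
      rw [mem_ofPred_eq, abs_lt, hlower, hupper, mem_sdiff]
    rw [hset, measureReal_sdiff (pi_mono fun _ _ => Ici_subset_Ioi.2 (by linarith))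
      (.univ_pi fun _ => measurableSet_Ici), hA, hB]
  · have hset : {x | |min (Finset.univ.inf' hne x) s| < t} = univ.pi fun _ => Ioi (-t) := by
      ext x
      rw [mem_ofPred_eq, abs_lt, hlower,
        and_iff_left ((min_le_right _ _).trans_lt (not_le.1 hts))]
    rw [hset, hA, sub_zero]

lemma integral_probAbsMinLt (n : ℕ) {s : ℝ} (hs0 : 0 ≤ s) (hs1 : s ≤ 1) :
    ∫ t in (0)..1, probAbsMinLt n s t
      = (2 ^ (n + 1) - 2 + (1 - s) ^ (n + 1)) / ((n + 1) * 2 ^ n) := by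
  have hind : probAbsMinLt n s
      = fun t => ((1 + t) / 2) ^ n - {t | t ≤ s}.indicator (fun t => ((1 - t) / 2) ^ n) t := by
    ext t
    simp only [probAbsMinLt, indicator_apply, mem_ofPred_eq]
  rw [hind, intervalIntegral.integral_sub ((by fun_prop : Continuous _).intervalIntegrable _ _),
    intervalIntegral.integral_indicator ⟨hs0, hs1⟩, integral_one_add_div_two_pow,
    integral_one_sub_div_two_pow]
  · simp only [div_pow]
    field_simp
    ring
  · exact intervalIntegrable_iff.2
      ((by fun_prop : Continuous _).integrableOn_uIoc.indicator measurableSet_Iic)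

lemma prod_unif_real_abs_min_inf'_lt_abs {ι : Type*} [Fintype ι]
    (hne : (Finset.univ : Finset ι).Nonempty) {s : ℝ} (hs0 : 0 < s) (hs1 : s ≤ 1) :
    ((Measure.pi fun _ : ι => unif).prod unif).real
        {p : (ι → ℝ) × ℝ | |min (Finset.univ.inf' hne p.1) s| < |p.2|}
      = (2 ^ (Fintype.card ι + 1) - 2 + (1 - s) ^ (Fintype.card ι + 1))
          / ((Fintype.card ι + 1) * 2 ^ Fintype.card ι) := by
  set S := {p : (ι → ℝ) × ℝ | |min (Finset.univ.inf' hne p.1) s| < |p.2|}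
  have hS : MeasurableSet S :=
    (isOpen_lt (by fun_prop) (by fun_prop)).measurableSet
  have hsection : ∀ᵐ z ∂unif, (Measure.pi fun _ => unif).real ((fun x => (x, z)) ⁻¹' S)
      = probAbsMinLt (Fintype.card ι) s |z| := by
    have hIcc : ∀ᵐ z ∂unif, z ∈ Icc (-1) 1 := by
      rw [unif]
      exact Measure.ae_smul_measure (ae_restrict_mem measurableSet_Icc) _
    filter_upwards [hIcc, Measure.ae_ne unif 0] with z hz hz0
    exact pi_unif_real_abs_min_inf'_lt hne hs0 (abs_pos.2 hz0) (abs_le.2 hz)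
  rw [measureReal_def, Measure.prod_apply_symm hS, ← integral_toReal
    (measurable_measure_prodMk_right hS).aemeasurable (ae_of_all _ fun _ => measure_lt_top _ _)]
  refine (integral_congr_ae hsection).trans ?_
  rw [integral_unif_comp_abs, integral_probAbsMinLt _ hs0.le hs1]

theorem stmt_8 (k : ℕ) (hk : 2 ≤ k) (s : ℝ) (hs0 : 0 < s) (hs1 : s ≤ 1) :
    (((Measure.pi fun _ : Fin (k - 1) => unif).prod unif)
        {p : (Fin (k - 1) → ℝ) × ℝ |
          |min (Finset.univ.inf' (Finset.univ_nonempty_iff.2 ⟨⟨0, by omega⟩⟩) p.1) s| < |p.2|}).toReal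
      = ((2 : ℝ) ^ k - 2 + (1 - s) ^ k) / (k * 2 ^ (k - 1)) := by
  obtain ⟨m, rfl⟩ : ∃ m, k = m + 1 := ⟨k - 1, by omega⟩
  rw [← measureReal_def, prod_unif_real_abs_min_inf'_lt_abs _ hs0 hs1]
  simp
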